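/- Let a, b ∈ ℂ with |a| = |b| = 1, Im(a) > 0, Im(b) > 0 and a ≠ b. Then sin(v(a,b)) = (|a − b| / |a·b − 1|) · ( |a + b|/2 + √(Im(a)·Im(b)) ). -/

import Mathlib

/-! The Möbius map `f x = (a - x) / (b - x)` sends the real line onto the circle with centre
`c = (a - b̄) / (b - b̄)` and radius `r = |a - b| / |b - b̄|`, except the point `1 = f ∞`.
For `a, b ∈ H²` one has `Re c > 0` and `r < |c|`, so the largest `|arg z|` on this circle is
attained where a ray from `0` touches it, and equals `|arg c| + arcsin (r / |c|)`. Expanding its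
sine gives a formula for `sin v(a, b)` on all of `H²`; for unit `a, b` the identities
`|a + b| |ab - 1| = 2 (Im a + Im b)` and `|a - b| |ab - 1| = 2 |Re a - Re b|` turn it into the
stated one. -/

open Complex ComplexConjugate

/-- The visual angle metric of the upper half plane:
`v(a,b) = sup {∠(a,x,b) : x ∈ ℝ}`, where the angle at the real vertex `x`
is `|arg((a−x)/(b−x))|`. -/
noncomputable def vAngle (a b : ℂ) : ℝ :=
  ⨆ x : ℝ, |((a - (x : ℂ)) / (b - (x : ℂ))).arg|

lemma abs_arg_le_arcsin_of_norm_sub_one_le {w : ℂ} {ρ : ℝ} (hw : ‖w - 1‖ ≤ ρ) (hρ : ρ < 1) :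
    |arg w| ≤ Real.arcsin ρ := by
  have hdisk : (w.re - 1) ^ 2 + w.im ^ 2 ≤ ρ ^ 2 := by
    have := pow_le_pow_left₀ (norm_nonneg _) hw 2
    rwa [← normSq_eq_norm_sq, normSq_apply, sub_re, sub_im, one_re, one_im, sub_zero,
      ← sq, ← sq] at this
  have hρ0 : 0 ≤ ρ := (norm_nonneg _).trans hw
  have hre : 0 < w.re := by nlinarith [sq_nonneg w.im]
  have hnorm : 0 < ‖w‖ := hre.trans_le (re_le_norm w)
  have him : |w.im / ‖w‖| ≤ ρ := by
    rw [abs_div, abs_norm, div_le_iff₀ hnorm]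
    refine abs_le_of_sq_le_sq ?_ (by positivity)
    rw [mul_pow, ← normSq_eq_norm_sq, normSq_apply]
    -- the tangents from `0` touch the disk where `w.re = 1 - ρ ^ 2`
    nlinarith [sq_nonneg (w.re - (1 - ρ ^ 2)),
      mul_le_mul_of_nonneg_right hdisk (sub_nonneg.2 (pow_le_one₀ (n := 2) hρ0 hρ.le))]
  obtain ⟨hlo, hhi⟩ := abs_le.1 him
  rw [arg_of_re_nonneg hre.le, abs_le, ← Real.arcsin_neg]
  exact ⟨Real.arcsin_le_arcsin hlo, Real.arcsin_le_arcsin hhi⟩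

lemma abs_arg_le_of_norm_sub_le {z c : ℂ} {r : ℝ} (hc : 0 < c.re) (hz : ‖z - c‖ ≤ r)
    (hr : r < ‖c‖) : |arg z| ≤ |arg c| + Real.arcsin (r / ‖c‖) := by
  have hc0 : c ≠ 0 := fun h ↦ by simp [h] at hc
  have hρ : r / ‖c‖ < 1 := (div_lt_one (norm_pos_iff.2 hc0)).2 hr
  have hw : ‖z / c - 1‖ ≤ r / ‖c‖ := by
    rw [div_sub_one hc0, norm_div]
    gcongr
  have hw0 : z / c ≠ 0 := by
    intro h
    rw [h, zero_sub, norm_neg, norm_one] at hw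
    linarith
  have hwarg := abs_arg_le_arcsin_of_norm_sub_one_le hw hρ
  have hcarg : |arg c| < Real.pi / 2 := abs_arg_lt_pi_div_two_iff.2 (Or.inl hc)
  have hβ : Real.arcsin (r / ‖c‖) < Real.pi / 2 := Real.arcsin_lt_pi_div_two.2 hρ
  have hsum : |arg c + arg (z / c)| < Real.pi := by
    linarith [abs_add_le (arg c) (arg (z / c))]
  have hmul := arg_mul hc0 hw0 ⟨(abs_lt.1 hsum).1, (abs_lt.1 hsum).2.le⟩
  rw [mul_div_cancel₀ z hc0] at hmul
  rw [hmul]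
  linarith [abs_add_le (arg c) (arg (z / c))]

lemma exists_norm_sub_eq_and_abs_arg_eq {c : ℂ} {r : ℝ} (hc : 0 < c.re) (hr0 : 0 ≤ r)
    (hr : r < ‖c‖) : ∃ z, ‖z - c‖ = r ∧ |arg z| = |arg c| + Real.arcsin (r / ‖c‖) := by
  have hc0 : c ≠ 0 := fun h ↦ by simp [h] at hc
  have hρ0 : 0 ≤ r / ‖c‖ := by positivity
  have hρ1 : r / ‖c‖ < 1 := (div_lt_one (norm_pos_iff.2 hc0)).2 hr
  set β := Real.arcsin (r / ‖c‖)
  have hβ0 : 0 ≤ β := Real.arcsin_nonneg.2 hρ0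
  have hβ : β < Real.pi / 2 := Real.arcsin_lt_pi_div_two.2 hρ1
  have hsinβ : Real.sin β = r / ‖c‖ := Real.sin_arcsin (by linarith) hρ1.le
  have hcarg : |arg c| < Real.pi / 2 := abs_arg_lt_pi_div_two_iff.2 (Or.inl hc)
  -- rotate `c` away from the positive real axis
  set θ := if 0 ≤ arg c then β else -β
  have hθ : |θ| = β ∧ |Real.sin θ| = |Real.sin β| ∧ |arg c + θ| = |arg c| + β := by
    unfold θ
    split_ifs with h
    · exact ⟨abs_of_nonneg hβ0, rfl, by rw [abs_of_nonneg h, abs_of_nonneg (by linarith)]⟩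
    · push Not at h
      refine ⟨by rw [abs_neg, abs_of_nonneg hβ0], by rw [Real.sin_neg, abs_neg],
        by rw [abs_of_neg h, abs_of_nonpos (by linarith)]; ring⟩
  obtain ⟨hθβ, hsinθ, hargθ⟩ := hθ
  set w : ℂ := (Real.cos θ : ℂ) * exp (θ * I)
  have hcos : 0 < Real.cos θ := Real.cos_pos_of_mem_Ioo (abs_lt.1 (hθβ ▸ hβ))
  have hw1 : w - 1 = Real.sin θ * I * exp (θ * I) := by
    simp only [w, exp_mul_I, ofReal_cos, ofReal_sin]
    linear_combination sin_sq_add_cos_sq (θ : ℂ) - sin (θ : ℂ) ^ 2 * I_sq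
  have hwarg : arg w = θ := by
    rw [arg_real_mul _ hcos, arg_exp_mul_I, toIocMod_eq_self]
    constructor <;> linarith [abs_lt.1 (hθβ ▸ hβ), Real.pi_pos]
  have hw0 : w ≠ 0 := mul_ne_zero (ofReal_ne_zero.2 hcos.ne') (exp_ne_zero _)
  have hmem : arg c + arg w ∈ Set.Ioc (-Real.pi) Real.pi := by
    obtain ⟨hlo, hhi⟩ := abs_lt.1 (hargθ ▸ (by linarith : |arg c| + β < Real.pi))
    exact ⟨hwarg ▸ hlo, hwarg ▸ hhi.le⟩
  refine ⟨c * w, ?_, by rw [arg_mul hc0 hw0 hmem, hwarg, hargθ]⟩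
  rw [← mul_sub_one, norm_mul, hw1, norm_mul, norm_mul, norm_exp_ofReal_mul_I, norm_I,
    norm_real, Real.norm_eq_abs, hsinθ, hsinβ, abs_of_nonneg hρ0]
  field_simp

lemma sin_abs_arg_add_arcsin {c : ℂ} (hc : c ≠ 0) {ρ : ℝ} (h₁ : -1 ≤ ρ) (h₂ : ρ ≤ 1) :
    Real.sin (|arg c| + Real.arcsin ρ) = (|c.im| * √(1 - ρ ^ 2) + c.re * ρ) / ‖c‖ := by
  have hsin : Real.sin |arg c| = |c.im| / ‖c‖ := by
    rcases le_or_gt 0 c.im with h | h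
    · rw [abs_of_nonneg (arg_nonneg_iff.2 h), sin_arg, abs_of_nonneg h]
    · rw [abs_of_neg (arg_neg_iff.2 h), Real.sin_neg, sin_arg, abs_of_neg h, neg_div]
  rw [Real.sin_add, hsin, Real.cos_abs, cos_arg hc, Real.sin_arcsin h₁ h₂, Real.cos_arcsin]
  ring

lemma sub_div_sub_sub_sub_div_sub {K : Type*} [Field K] {a b w d : K} (hw : b ≠ w)
    (hd : b ≠ d) :
    (a - w) / (b - w) - (a - d) / (b - d) = (a - b) * (w - d) / ((b - w) * (b - d)) := by
  rw [div_sub_div _ _ (sub_ne_zero.2 hw) (sub_ne_zero.2 hd)]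
  ring

lemma normSq_sub_conj_sub_normSq_sub (w b : ℂ) :
    normSq (w - conj b) - normSq (w - b) = 4 * w.im * b.im := by
  simp only [normSq_apply, sub_re, sub_im, conj_re, conj_im]
  ring

lemma norm_sub_conj_eq_norm_sub_iff {w b : ℂ} (hb : b.im ≠ 0) :
    ‖w - conj b‖ = ‖w - b‖ ↔ w.im = 0 := by
  rw [← sq_eq_sq₀ (norm_nonneg _) (norm_nonneg _), ← normSq_eq_norm_sq, ← normSq_eq_norm_sq,
    ← sub_eq_zero, normSq_sub_conj_sub_normSq_sub]
  simp [hb]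

lemma norm_sub_lt_norm_sub_conj {a b : ℂ} (ha : 0 < a.im) (hb : 0 < b.im) :
    ‖a - b‖ < ‖a - conj b‖ := by
  rw [← sq_lt_sq₀ (norm_nonneg _) (norm_nonneg _), ← normSq_eq_norm_sq, ← normSq_eq_norm_sq,
    ← sub_pos, normSq_sub_conj_sub_normSq_sub]
  positivity

lemma re_div_sub_conj (z b : ℂ) : (z / (b - conj b)).re = z.im / (2 * b.im) := by
  rw [sub_conj, mul_comm _ I, ← div_div, div_I, div_ofReal_re]
  simp

lemma im_div_sub_conj (z b : ℂ) : (z / (b - conj b)).im = -z.re / (2 * b.im) := by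
  rw [sub_conj, mul_comm _ I, ← div_div, div_I, div_ofReal_im]
  simp

lemma norm_sub_conj_self (b : ℂ) : ‖b - conj b‖ = 2 * |b.im| := by
  rw [sub_conj, norm_mul, norm_I, mul_one, norm_real, Real.norm_eq_abs, abs_mul, abs_two]

lemma norm_sub_conj_self_pos {b : ℂ} (hb : 0 < b.im) : 0 < ‖b - conj b‖ := by
  rw [norm_sub_conj_self, abs_of_pos hb]
  positivity

section

variable {a b : ℂ}

lemma norm_div_sub_sub_div_sub_conj_eq_iff (hab : a ≠ b) (hb : b.im ≠ 0) {w : ℂ}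
    (hw : w ≠ b) :
    ‖(a - w) / (b - w) - (a - conj b) / (b - conj b)‖ = ‖a - b‖ / ‖b - conj b‖ ↔ w.im = 0 := by
  have hbb : b ≠ conj b := fun h ↦ hb (conj_eq_iff_im.1 h.symm)
  have hab' : ‖a - b‖ ≠ 0 := norm_ne_zero_iff.2 (sub_ne_zero.2 hab)
  have hbb' : ‖b - conj b‖ ≠ 0 := norm_ne_zero_iff.2 (sub_ne_zero.2 hbb)
  have hwb : ‖w - b‖ ≠ 0 := norm_ne_zero_iff.2 (sub_ne_zero.2 hw)
  rw [sub_div_sub_sub_sub_div_sub hw.symm hbb, norm_div, norm_mul, norm_mul, norm_sub_rev b w,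
    ← norm_sub_conj_eq_norm_sub_iff hb,
    show ‖a - b‖ * ‖w - conj b‖ / (‖w - b‖ * ‖b - conj b‖)
      = ‖a - b‖ / ‖b - conj b‖ * (‖w - conj b‖ / ‖w - b‖) by ring,
    mul_eq_left₀ (div_ne_zero hab' hbb'), div_eq_one_iff_eq hwb]

lemma exists_ofReal_div_eq (hab : a ≠ b) (hb : b.im ≠ 0) {z : ℂ} (hz1 : z ≠ 1)
    (hz : ‖z - (a - conj b) / (b - conj b)‖ = ‖a - b‖ / ‖b - conj b‖) :
    ∃ x : ℝ, (a - x) / (b - x) = z := by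
  have hz1' : z - 1 ≠ 0 := sub_ne_zero.2 hz1
  set w := (z * b - a) / (z - 1)
  have hbw : b - w = (a - b) / (z - 1) := by
    unfold w
    field_simp
    ring
  have hwb : w ≠ b := fun h ↦ by
    rw [h, sub_self, eq_comm, div_eq_zero_iff] at hbw
    exact hbw.elim (fun h' ↦ hab (sub_eq_zero.1 h')) hz1'
  have hfw : (a - w) / (b - w) = z := by
    rw [div_eq_iff (sub_ne_zero.2 hwb.symm), hbw]
    unfold w
    field_simp
    ring
  have hw : w.im = 0 := (norm_div_sub_sub_div_sub_conj_eq_iff hab hb hwb).1 (hfw ▸ hz)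
  exact ⟨w.re, by rw [← hfw]; congr <;> exact Complex.ext rfl (by simp [hw])⟩

theorem vAngle_eq (hia : 0 < a.im) (hib : 0 < b.im) (hab : a ≠ b) :
    vAngle a b =
      |arg ((a - conj b) / (b - conj b))| + Real.arcsin (‖a - b‖ / ‖a - conj b‖) := by
  set c := (a - conj b) / (b - conj b)
  set r := ‖a - b‖ / ‖b - conj b‖
  have hbb := norm_sub_conj_self_pos hib
  have hr : 0 < r := div_pos (norm_pos_iff.2 (sub_ne_zero.2 hab)) hbb
  have hc : 0 < c.re := by
    rw [re_div_sub_conj, sub_im, conj_im, sub_neg_eq_add]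
    positivity
  have hrc : r < ‖c‖ := by
    rw [norm_div]
    exact div_lt_div_of_pos_right (norm_sub_lt_norm_sub_conj hia hib) hbb
  have hρ : r / ‖c‖ = ‖a - b‖ / ‖a - conj b‖ := by
    rw [norm_div, div_div_div_cancel_right₀ hbb.ne']
  have hcircle : ∀ x : ℝ, ‖(a - x) / (b - x) - c‖ = r := fun x ↦
    (norm_div_sub_sub_div_sub_conj_eq_iff hab hib.ne' fun h ↦ by simp [← h] at hib).2
      (ofReal_im x)
  have hbound : ∀ x : ℝ, |arg ((a - x) / (b - x))| ≤ |arg c| + Real.arcsin (r / ‖c‖) :=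
    fun x ↦ abs_arg_le_of_norm_sub_le hc (hcircle x).le hrc
  obtain ⟨z, hzc, hzarg⟩ := exists_norm_sub_eq_and_abs_arg_eq hc hr.le hrc
  have hz1 : z ≠ 1 := by
    rintro rfl
    rw [arg_one, abs_zero] at hzarg
    linarith [abs_nonneg (arg c), Real.arcsin_pos.2 (div_pos hr (hr.trans hrc))]
  obtain ⟨x, hx⟩ := exists_ofReal_div_eq hab hib.ne' hz1 hzc
  rw [← hρ]
  refine le_antisymm (ciSup_le hbound) ?_
  rw [← hzarg, ← hx]
  exact le_ciSup ⟨_, Set.forall_mem_range.2 hbound⟩ x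

theorem sin_vAngle_eq (hia : 0 < a.im) (hib : 0 < b.im) (hab : a ≠ b) :
    Real.sin (vAngle a b) =
      (‖a - b‖ * (a.im + b.im) + 2 * |a.re - b.re| * √(a.im * b.im)) / ‖a - conj b‖ ^ 2 := by
  have hN : 0 < ‖a - conj b‖ := (norm_nonneg _).trans_lt (norm_sub_lt_norm_sub_conj hia hib)
  have hρ : 0 ≤ ‖a - b‖ / ‖a - conj b‖ := by positivity
  have hρ1 : ‖a - b‖ / ‖a - conj b‖ ≤ 1 :=
    (div_le_one hN).2 (norm_sub_lt_norm_sub_conj hia hib).le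
  have hsqrt : √(1 - (‖a - b‖ / ‖a - conj b‖) ^ 2) = 2 * √(a.im * b.im) / ‖a - conj b‖ := by
    have hdiff := normSq_sub_conj_sub_normSq_sub a b
    rw [normSq_eq_norm_sq, normSq_eq_norm_sq] at hdiff
    rw [← Real.sqrt_sq (by positivity : 0 ≤ 2 * √(a.im * b.im) / ‖a - conj b‖)]
    congr 1
    rw [div_pow, div_pow, mul_pow, Real.sq_sqrt (by positivity)]
    field_simp
    linear_combination hdiff
  have hc0 : (a - conj b) / (b - conj b) ≠ 0 :=
    div_ne_zero (norm_pos_iff.1 hN) (norm_pos_iff.1 (norm_sub_conj_self_pos hib))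
  rw [vAngle_eq hia hib hab, sin_abs_arg_add_arcsin hc0 (by linarith) hρ1, hsqrt,
    re_div_sub_conj, im_div_sub_conj, norm_div, norm_sub_conj_self, abs_of_pos hib, sub_re,
    sub_im, conj_re, conj_im, abs_div, abs_neg, abs_of_pos (by positivity : 0 < 2 * b.im)]
  field_simp
  ring

lemma norm_sub_conj_eq_norm_mul_sub_one (hb : ‖b‖ = 1) : ‖a - conj b‖ = ‖a * b - 1‖ := by
  have hbb : b * conj b = 1 := by rw [mul_conj', hb, ofReal_one, one_pow]
  rw [show a - conj b = (a * b - 1) * conj b by linear_combination -a * hbb, norm_mul, norm_conj,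
    hb, mul_one]

lemma norm_add_mul_norm_mul_sub_one (ha : ‖a‖ = 1) (hb : ‖b‖ = 1) :
    ‖a + b‖ * ‖a * b - 1‖ = 2 * |a.im + b.im| := by
  have haa : a * conj a = 1 := by rw [mul_conj', ha, ofReal_one, one_pow]
  have hbb : b * conj b = 1 := by rw [mul_conj', hb, ofReal_one, one_pow]
  rw [← norm_conj (a * b - 1), ← norm_mul,
    show (a + b) * conj (a * b - 1) = -((a - conj a) + (b - conj b)) by
      simp only [map_sub, map_mul, map_one]
      linear_combination conj b * haa + conj a * hbb,
    sub_conj, sub_conj, ← add_mul, norm_neg, norm_mul, norm_I, mul_one, ← ofReal_add,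
    norm_real, Real.norm_eq_abs, ← mul_add, abs_mul, abs_two]

lemma norm_sub_mul_norm_mul_sub_one (ha : ‖a‖ = 1) (hb : ‖b‖ = 1) :
    ‖a - b‖ * ‖a * b - 1‖ = 2 * |a.re - b.re| := by
  have haa : a * conj a = 1 := by rw [mul_conj', ha, ofReal_one, one_pow]
  have hbb : b * conj b = 1 := by rw [mul_conj', hb, ofReal_one, one_pow]
  rw [← norm_conj (a * b - 1), ← norm_mul,
    show (a - b) * conj (a * b - 1) = (b + conj b) - (a + conj a) by
      simp only [map_sub, map_mul, map_one]
      linear_combination conj b * haa - conj a * hbb,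
    add_conj, add_conj, ← ofReal_sub, norm_real, Real.norm_eq_abs, ← mul_sub, abs_mul, abs_two,
    abs_sub_comm]

end

theorem sin_vAngle_formula (a b : ℂ)
    (ha : ‖a‖ = 1) (hb : ‖b‖ = 1)
    (hia : 0 < a.im) (hib : 0 < b.im) (hab : a ≠ b) :
    Real.sin (vAngle a b) =
      (‖a - b‖ / ‖a * b - 1‖) *
        (‖a + b‖ / 2 + Real.sqrt (a.im * b.im)) := by
  have hplus := norm_add_mul_norm_mul_sub_one ha hb
  have hminus := norm_sub_mul_norm_mul_sub_one ha hb
  have hm : ‖a * b - 1‖ ≠ 0 := by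
    rw [← norm_sub_conj_eq_norm_mul_sub_one hb]
    exact ((norm_nonneg _).trans_lt (norm_sub_lt_norm_sub_conj hia hib)).ne'
  rw [abs_of_pos (add_pos hia hib)] at hplus
  rw [sin_vAngle_eq hia hib hab, norm_sub_conj_eq_norm_mul_sub_one hb]
  field_simp
  linear_combination -‖a - b‖ * hplus - 2 * √(a.im * b.im) * hminus
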